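/- arXiv:2204.09136 — 6 statements merged into one kernel-verified Lean document; each statement's English description precedes it below -/
import Mathlib

section
/- If u, v ∈ {0,1}^n are vectors with |u| = |v| = n/2 and Hamming distance HAM(u,v) ≥ n/10, then for 0 ≤ p < 1 there exists a constant C_p > 1 such that C_p · ‖2u‖_p^p ≤ ‖u+v‖_p^p, where ‖x‖_p^p = Σ_i |x_i|^p (with the convention 0^0 = 0 for p = 0, i.e., F_0 counts nonzero coordinates). -/
/-! On `{0,1}`-valued coordinates the map `k ↦ k^p` (with `0 ↦ 0`) sends `0, 1, 2` to
`0, 1, 2^p`, so it agrees with the affine expression `r k + (1 - r) [k = 1]` where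
`r = 2^(p-1)`. Summing, `F_p(u + v) = r (|u| + |v|) + (1 - r) HAM(u, v)`; for `v = u` this is
`F_p(2u) = r n`, while a Hamming distance of at least `n/10` adds at least `(1 - r) n / 10`.
As `r < 1` for `p < 1`, this is a constant factor `(9 + 1/r)/10 > 1` over `F_p(2u)`. -/

open Finset

/-- `F_p(x) = ∑ᵢ xᵢ^p`, with zero coordinates contributing `0` even when `p = 0`. -/
noncomputable def frequencyMoment {ι : Type*} [Fintype ι] (p : ℝ) (x : ι → ℕ) : ℝ :=
  ∑ i, if x i = 0 then (0 : ℝ) else (x i : ℝ) ^ p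

lemma frequencyMoment_term_add (p : ℝ) {a b : ℕ} (ha : a ≤ 1) (hb : b ≤ 1) :
    (if a + b = 0 then (0 : ℝ) else ((a + b : ℕ) : ℝ) ^ p) =
      (2 : ℝ) ^ (p - 1) * (a + b) + (1 - (2 : ℝ) ^ (p - 1)) * (if a ≠ b then 1 else 0) := by
  have h2 : (2 : ℝ) ^ (p - 1) * 2 = 2 ^ p := by
    rw [Real.rpow_sub_one two_ne_zero, div_mul_cancel₀ _ two_ne_zero]
  interval_cases a <;> interval_cases b <;> norm_num [h2]

lemma frequencyMoment_add {ι : Type*} [Fintype ι] (p : ℝ) {u v : ι → ℕ}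
    (hu : ∀ i, u i ≤ 1) (hv : ∀ i, v i ≤ 1) :
    frequencyMoment p (u + v) =
      (2 : ℝ) ^ (p - 1) * ((∑ i, u i : ℕ) + (∑ i, v i : ℕ)) +
        (1 - (2 : ℝ) ^ (p - 1)) * hammingDist u v := by
  simp only [frequencyMoment, Pi.add_apply]
  rw [sum_congr rfl fun i _ => frequencyMoment_term_add p (hu i) (hv i)]
  simp only [sum_add_distrib, ← mul_sum, Nat.cast_sum, sum_boole, hammingDist]

lemma frequencyMoment_two_mul {ι : Type*} [Fintype ι] (p : ℝ) {u : ι → ℕ}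
    (hu : ∀ i, u i ≤ 1) :
    frequencyMoment p (fun i => 2 * u i) = (2 : ℝ) ^ (p - 1) * (2 * (∑ i, u i : ℕ)) := by
  have h2u : (fun i => 2 * u i) = u + u := funext fun i => two_mul (u i)
  rw [h2u, frequencyMoment_add p hu hu, hammingDist_self]
  push_cast
  ring

lemma ncard_setOf_ne_eq_hammingDist {ι : Type*} [Fintype ι] {β : ι → Type*}
    [∀ i, DecidableEq (β i)] (u v : ∀ i, β i) :
    {i | u i ≠ v i}.ncard = hammingDist u v := by
  rw [hammingDist, ← Set.ncard_coe_finset, coe_filter]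
  simp only [mem_univ, true_and]

theorem stmt_1_general (p : ℝ) (hp1 : p < 1) :
    ∃ C : ℝ, 1 < C ∧
      ∀ (n : ℕ) (u v : Fin n → ℕ),
        (∀ i, u i ≤ 1) → (∀ i, v i ≤ 1) →
        2 * (∑ i, u i) = n → 2 * (∑ i, v i) = n →
        n ≤ 10 * ({i | u i ≠ v i} : Set (Fin n)).ncard →
        C * (∑ i, if 2 * u i = 0 then (0 : ℝ) else ((2 * u i : ℕ) : ℝ) ^ p) ≤
          ∑ i, if u i + v i = 0 then (0 : ℝ) else ((u i + v i : ℕ) : ℝ) ^ p := by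
  set r : ℝ := (2 : ℝ) ^ (p - 1)
  have hr0 : 0 < r := by positivity
  have hr1 : r < 1 := Real.rpow_lt_one_of_one_lt_of_neg one_lt_two (by linarith)
  refine ⟨(9 + r⁻¹) / 10, by linarith [one_lt_inv_iff₀.mpr ⟨hr0, hr1⟩], ?_⟩
  intro n u v hu hv hsu hsv hd
  have hu_half : ((∑ i, u i : ℕ) : ℝ) = n / 2 := by
    rw [eq_div_iff two_ne_zero, mul_comm]; exact_mod_cast hsu
  have hv_half : ((∑ i, v i : ℕ) : ℝ) = n / 2 := by
    rw [eq_div_iff two_ne_zero, mul_comm]; exact_mod_cast hsv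
  have hd' : (n : ℝ) ≤ 10 * hammingDist u v := by
    rw [← ncard_setOf_ne_eq_hammingDist]; exact_mod_cast hd
  change _ * frequencyMoment p (fun i => 2 * u i) ≤ frequencyMoment p (u + v)
  rw [frequencyMoment_two_mul p hu, frequencyMoment_add p hu hv, hu_half, hv_half, add_halves]
  calc (9 + r⁻¹) / 10 * (r * (2 * (n / 2))) = r * n + (1 - r) * (n / 10) := by
        field_simp; ring
    _ ≤ r * n + (1 - r) * hammingDist u v := by gcongr; linarith

/-- For `0 ≤ p < 1` there is a constant `C_p > 1` such that for all
0/1 vectors `u, v ∈ {0,1}^n` with exactly `n/2` ones each and Hamming distance at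
least `n/10`, we have `C_p · ‖2u‖_p^p ≤ ‖u+v‖_p^p`, where `‖x‖_p^p = Σ_i x_i^p`
with the convention `0^0 = 0` (so `p = 0` counts nonzero coordinates). -/
theorem stmt_1 (p : ℝ) (hp0 : 0 ≤ p) (hp1 : p < 1) :
    ∃ C : ℝ, 1 < C ∧
      ∀ (n : ℕ) (u v : Fin n → ℕ),
        (∀ i, u i ≤ 1) → (∀ i, v i ≤ 1) →
        2 * (∑ i, u i) = n → 2 * (∑ i, v i) = n →
        n ≤ 10 * ({i | u i ≠ v i} : Set (Fin n)).ncard →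
        C * (∑ i, if 2 * u i = 0 then (0 : ℝ) else ((2 * u i : ℕ) : ℝ) ^ p) ≤
          ∑ i, if u i + v i = 0 then (0 : ℝ) else ((u i + v i : ℕ) : ℝ) ^ p :=
  stmt_1_general p hp1
end

section
/- Let {I(t)}_{t=1}^{n+1} be a family of sets of closed integer intervals satisfying properties (i)-(iii) of the interval family axioms (I(1) = {[1,1]}; intervals persist under containment into later times; and shifting by +1 into the next time), and additionally each I(t) consists of maximal intervals. Call k exceptional at time t if k is present at time t but k+1 is absent at time t+1. For h ≥ 1 let φ_h be the number of times t ∈ {1,...,n} at which some count 1 ≤ k ≤ h is exceptional. If (φ_h + 1)·h ≤ n, then there exists t₀ ∈ {1,...,n+1} with |I(t₀)| ≥ h+1. -/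
/-!
Count 1 is present at every time, since `[1,1]` persists into some interval whose left
endpoint can only be 1. At a time that is not exceptional, every present count
`k ≤ h` forces `k + 1` at the next time. The `φ_h` exceptional times meet at most `φ_h`
of the `φ_h + 1` disjoint windows `(i h, (i+1) h]` inside `[1, n]`, so some window is
free of them; running through it, after `j` steps all counts `1, …, j + 1` are present,
and at its end the `h + 1` counts `1, …, h + 1` give `h + 1` distinct intervals.
-/

open Finset

def Present (I : ℕ → Finset (ℕ × ℕ)) (t k : ℕ) : Prop := ∃ ℓ, (k, ℓ) ∈ I t

theorem exists_window_disjoint (E : Set ℕ) (hE : E.Finite) (h : ℕ) :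
    ∃ i ≤ E.ncard, ∀ s, i * h < s → s ≤ (i + 1) * h → s ∉ E := by
  classical
  -- `(s - 1) / h` is the index of the window containing `s`.
  have hcard : (hE.toFinset.image fun s => (s - 1) / h).card < (range (E.ncard + 1)).card := by
    rw [card_range, Set.ncard_eq_toFinset_card E hE]
    exact Nat.lt_succ_of_le card_image_le
  obtain ⟨i, hi, hiE⟩ := exists_mem_notMem_of_card_lt_card hcard
  refine ⟨i, Nat.lt_succ_iff.mp (mem_range.mp hi), fun s hs₁ hs₂ hsE => hiE ?_⟩
  refine mem_image.mpr ⟨s, hE.mem_toFinset.mpr hsE, Nat.div_eq_of_lt_le ?_ ?_⟩ <;> omega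

theorem card_le_card_of_forall_exists_mem {α β : Type*} (A : Finset α) (S : Finset (α × β))
    (hA : ∀ a ∈ A, ∃ b, (a, b) ∈ S) : A.card ≤ S.card := by
  classical
  calc A.card ≤ (S.image Prod.fst).card :=
        card_le_card fun a ha => let ⟨b, hb⟩ := hA a ha; mem_image.mpr ⟨(a, b), hb, rfl⟩
    _ ≤ S.card := card_image_le

section Present

variable {I : ℕ → Finset (ℕ × ℕ)}

theorem present_one (hpos : ∀ t kl, kl ∈ I t → 1 ≤ kl.1)
    (h1 : I 1 = {(1, 1)})
    (h2 : ∀ t t' : ℕ, 1 ≤ t → t ≤ t' → ∀ k ℓ, (k, ℓ) ∈ I t →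
      ∃ k' ℓ', (k', ℓ') ∈ I t' ∧ k' ≤ k ∧ ℓ ≤ ℓ')
    {t : ℕ} (ht : 1 ≤ t) : Present I t 1 := by
  obtain ⟨k', ℓ', hmem, hk', -⟩ := h2 1 t le_rfl ht 1 1 (by simp [h1])
  obtain rfl : k' = 1 := le_antisymm hk' (hpos t _ hmem)
  exact ⟨ℓ', hmem⟩

theorem present_of_forall_not_exceptional {a h : ℕ} (hone : ∀ t, a ≤ t → Present I t 1)
    (hstep : ∀ s k, a ≤ s → s < a + h → 1 ≤ k → k ≤ h →
      Present I s k → Present I (s + 1) (k + 1)) :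
    ∀ j ≤ h, ∀ k ∈ Icc 1 (j + 1), Present I (a + j) k := by
  intro j
  induction j with
  | zero =>
    intro _ k hk
    obtain rfl : k = 1 := by simp at hk; omega
    exact hone a le_rfl
  | succ j ih =>
    intro hj k hk
    rw [mem_Icc] at hk
    obtain rfl | hk₁ := eq_or_lt_of_le hk.1
    · exact hone _ (Nat.le_add_right a _)
    obtain ⟨k, rfl⟩ : ∃ k', k = k' + 1 := ⟨k - 1, by omega⟩
    have hprev := ih (by omega) k (mem_Icc.mpr ⟨by omega, by omega⟩)
    exact hstep (a + j) k (by omega) (by omega) (by omega) (by omega) hprev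

end Present

theorem stmt_4_general (n h : ℕ) (I : ℕ → Finset (ℕ × ℕ))
    (hvalid : ∀ t kl, kl ∈ I t → 1 ≤ kl.1 ∧ kl.1 ≤ kl.2)
    (h1 : I 1 = {(1, 1)})
    (h2 : ∀ t t' : ℕ, 1 ≤ t → t ≤ t' → ∀ k ℓ, (k, ℓ) ∈ I t →
      ∃ k' ℓ', (k', ℓ') ∈ I t' ∧ k' ≤ k ∧ ℓ ≤ ℓ')
    (hφ : (({t | 1 ≤ t ∧ t ≤ n ∧ ∃ k, 1 ≤ k ∧ k ≤ h ∧
        (∃ ℓ, (k, ℓ) ∈ I t) ∧ ¬ ∃ ℓ, (k + 1, ℓ) ∈ I (t + 1)} : Set ℕ).ncard + 1) * h ≤ n) :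
    ∃ t₀, 1 ≤ t₀ ∧ t₀ ≤ n + 1 ∧ h + 1 ≤ (I t₀).card := by
  set E : Set ℕ := {t | 1 ≤ t ∧ t ≤ n ∧ ∃ k, 1 ≤ k ∧ k ≤ h ∧
    Present I t k ∧ ¬ Present I (t + 1) (k + 1)}
  have hEfin : E.Finite := (Set.finite_Icc 1 n).subset fun t ht => ⟨ht.1, ht.2.1⟩
  obtain ⟨i, hiφ, hfree⟩ := exists_window_disjoint E hEfin h
  have hwindow : (i + 1) * h ≤ n :=
    (Nat.mul_le_mul_right h (by omega : i + 1 ≤ E.ncard + 1)).trans hφ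
  have hmul : (i + 1) * h = i * h + h := Nat.succ_mul i h
  have hstep : ∀ s k, i * h + 1 ≤ s → s < i * h + 1 + h → 1 ≤ k → k ≤ h →
      Present I s k → Present I (s + 1) (k + 1) := fun s k hs₁ hs₂ hk₁ hk₂ hk => by
    by_contra hk'
    exact hfree s (by omega) (by omega) ⟨by omega, by omega, k, hk₁, hk₂, hk, hk'⟩
  have hall := present_of_forall_not_exceptional
    (fun _ ht => present_one (fun t kl hkl => (hvalid t kl hkl).1) h1 h2 (by omega : 1 ≤ _)) hstep h le_rfl
  refine ⟨i * h + 1 + h, by omega, by omega, ?_⟩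
  simpa using card_le_card_of_forall_exists_mem _ _ hall

/-- For a family `{I(t)}_{t=1}^{n+1}` of finite sets of maximal closed
integer intervals satisfying the three interval-family axioms, let `φ_h` be the
number of times `t ∈ {1,…,n}` at which some count `1 ≤ k ≤ h` is exceptional
(present at time `t` but `k+1` absent at time `t+1`). If `(φ_h + 1)·h ≤ n`,
then there exists `t₀ ∈ {1,…,n+1}` with `|I(t₀)| ≥ h + 1`. -/
theorem stmt_4 (n h : ℕ) (hh : 1 ≤ h) (I : ℕ → Finset (ℕ × ℕ))
    (hvalid : ∀ t kl, kl ∈ I t → 1 ≤ kl.1 ∧ kl.1 ≤ kl.2)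
    (h1 : I 1 = {(1, 1)})
    (h2 : ∀ t t' : ℕ, 1 ≤ t → t ≤ t' → ∀ k ℓ, (k, ℓ) ∈ I t →
      ∃ k' ℓ', (k', ℓ') ∈ I t' ∧ k' ≤ k ∧ ℓ ≤ ℓ')
    (h3 : ∀ t : ℕ, 1 ≤ t → ∀ k ℓ, (k, ℓ) ∈ I t →
      ∃ k' ℓ', (k', ℓ') ∈ I (t + 1) ∧ k' ≤ k + 1 ∧ ℓ + 1 ≤ ℓ')
    (hmax : ∀ t k ℓ k' ℓ', (k, ℓ) ∈ I t → (k', ℓ') ∈ I t →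
      k' ≤ k → ℓ ≤ ℓ' → k = k' ∧ ℓ = ℓ')
    (hφ : (({t | 1 ≤ t ∧ t ≤ n ∧ ∃ k, 1 ≤ k ∧ k ≤ h ∧
        (∃ ℓ, (k, ℓ) ∈ I t) ∧ ¬ ∃ ℓ, (k + 1, ℓ) ∈ I (t + 1)} : Set ℕ).ncard + 1) * h ≤ n) :
    ∃ t₀, 1 ≤ t₀ ∧ t₀ ≤ n + 1 ∧ h + 1 ≤ (I t₀).card :=
  stmt_4_general n h I hvalid h1 h2 hφ
end

section
/- Let {I(t)}_{t≥1} be a family of sets of maximal closed integer intervals satisfying (i) I(1) = {[1,1]}; (ii) for t' ≥ t every interval of I(t) is contained in some interval of I(t'); (iii) for every [k,ℓ] ∈ I(t) some interval of I(t+1) contains [k+1, ℓ+1]. Suppose k is exceptional (present at time t but k+1 absent at time t+1) at each time t ∈ E for a nonempty finite set E of times. Then for all t > max(E), there exists an interval in I(t) containing k whose right endpoint is at least k + |E|. -/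
/-!
Fix `k`, let `ℓ_s` be the right endpoint of the interval of `I(s)` with left endpoint `k` at
each exceptional time `s ∈ E`. Since `k + 1` is absent at time `s + 1`, the interval of `I(s + 1)`
containing `[k + 1, ℓ_s + 1]` starts at or before `k`, and axiom (ii) carries it forward to every
later time. At a later exceptional time `t` maximality forces this interval to be dominated by
`[k, ℓ_t]`, so `s ↦ ℓ_s` is strictly increasing on `E`. Its `|E|` values lie in `[k, ℓ_{max E}]`,
whence `ℓ_{max E} + 1 ≥ k + |E|`, and one more application of the first step finishes the proof.
-/

theorem Finset.add_card_le_max'_succ_of_strictMonoOn {α : Type*} [LinearOrder α]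
    {E : Finset α} (hE : E.Nonempty) {f : α → ℕ} (hf : StrictMonoOn f E) {k : ℕ}
    (hk : ∀ s ∈ E, k ≤ f s) : k + E.card ≤ f (E.max' hE) + 1 := by
  have hcard : E.card ≤ (Finset.Icc k (f (E.max' hE))).card := by
    refine Finset.card_le_card_of_injOn f (fun s hs => ?_) hf.injOn
    exact Finset.mem_Icc.2
      ⟨hk s hs, hf.monotoneOn hs (E.max'_mem hE) (E.le_max' s hs)⟩
  rw [Nat.card_Icc] at hcard
  have := hk _ (E.max'_mem hE)
  omega

section IntervalFamily

variable {I : ℕ → Set (ℕ × ℕ)} {k ℓ s t : ℕ}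

theorem snd_le_of_mem_of_fst_le
    (hmax : ∀ t a b a' b', (a, b) ∈ I t → (a', b') ∈ I t →
      a' ≤ a → b ≤ b' → a = a' ∧ b = b')
    {a b : ℕ} (hkℓ : (k, ℓ) ∈ I t) (hab : (a, b) ∈ I t) (hak : a ≤ k) : b ≤ ℓ := by
  by_contra! hℓb
  have := (hmax t k ℓ a b hkℓ hab hak hℓb.le).2
  omega

theorem exists_mem_fst_le_snd_gt_of_absent
    (h2 : ∀ t t' : ℕ, 1 ≤ t → t ≤ t' → ∀ a b, (a, b) ∈ I t →
      ∃ a' b', (a', b') ∈ I t' ∧ a' ≤ a ∧ b ≤ b')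
    (h3 : ∀ t : ℕ, 1 ≤ t → ∀ a b, (a, b) ∈ I t →
      ∃ a' b', (a', b') ∈ I (t + 1) ∧ a' ≤ a + 1 ∧ b + 1 ≤ b')
    (hs : 1 ≤ s) (hst : s < t) (hkℓ : (k, ℓ) ∈ I s)
    (habsent : ¬ ∃ ℓ', (k + 1, ℓ') ∈ I (s + 1)) :
    ∃ a b, (a, b) ∈ I t ∧ a ≤ k ∧ ℓ + 1 ≤ b := by
  obtain ⟨a, b, hab, ha, hb⟩ := h3 s hs k ℓ hkℓ
  have hak : a ≤ k := by
    rcases ha.lt_or_eq with ha | rfl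
    · omega
    · exact absurd ⟨b, hab⟩ habsent
  obtain ⟨a', b', hab', ha', hb'⟩ := h2 (s + 1) t (by omega) hst a b hab
  exact ⟨a', b', hab', ha'.trans hak, hb.trans hb'⟩

end IntervalFamily

theorem stmt_5_general (I : ℕ → Set (ℕ × ℕ)) (k : ℕ)
    (hvalid : ∀ t kl, kl ∈ I t → 1 ≤ kl.1 ∧ kl.1 ≤ kl.2)
    (h2 : ∀ t t' : ℕ, 1 ≤ t → t ≤ t' → ∀ a b, (a, b) ∈ I t →
      ∃ a' b', (a', b') ∈ I t' ∧ a' ≤ a ∧ b ≤ b')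
    (h3 : ∀ t : ℕ, 1 ≤ t → ∀ a b, (a, b) ∈ I t →
      ∃ a' b', (a', b') ∈ I (t + 1) ∧ a' ≤ a + 1 ∧ b + 1 ≤ b')
    (hmax : ∀ t a b a' b', (a, b) ∈ I t → (a', b') ∈ I t →
      a' ≤ a → b ≤ b' → a = a' ∧ b = b')
    (E : Finset ℕ) (hE : E.Nonempty) (hE1 : ∀ s ∈ E, 1 ≤ s)
    (hexc : ∀ t ∈ E, (∃ ℓ, (k, ℓ) ∈ I t) ∧ ¬ ∃ ℓ, (k + 1, ℓ) ∈ I (t + 1)) :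
    ∀ t, E.max' hE < t →
      ∃ a b, (a, b) ∈ I t ∧ a ≤ k ∧ k ≤ b ∧ k + E.card ≤ b := by
  intro t ht
  choose! ℓ hℓ using fun s hs => (hexc s hs).1
  have hmono : StrictMonoOn ℓ E := fun s hs s' hs' hss' => by
    obtain ⟨a, b, hab, hak, hb⟩ := exists_mem_fst_le_snd_gt_of_absent h2 h3 (hE1 s hs) hss'
      (hℓ s hs) (hexc s hs).2
    exact hb.trans (snd_le_of_mem_of_fst_le hmax (hℓ s' hs') hab hak)
  have hcard := E.add_card_le_max'_succ_of_strictMonoOn hE hmono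
    fun s hs => (hvalid s _ (hℓ s hs)).2
  have hm := E.max'_mem hE
  obtain ⟨a, b, hab, hak, hb⟩ :=
    exists_mem_fst_le_snd_gt_of_absent h2 h3 (hE1 _ hm) ht (hℓ _ hm) (hexc _ hm).2
  exact ⟨a, b, hab, hak, by omega, hcard.trans hb⟩

/-- For a family of sets of maximal closed integer intervals
satisfying the three interval-family axioms, if `k` is exceptional (present at
time `t` but `k+1` absent at time `t+1`) at every time `t ∈ E` for a nonempty
finite set `E` of times (all ≥ 1), then for all `t > max(E)` there is an
interval of `I(t)` containing `k` whose right endpoint is at least `k + |E|`. -/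
theorem stmt_5 (I : ℕ → Set (ℕ × ℕ)) (k : ℕ)
    (hvalid : ∀ t kl, kl ∈ I t → 1 ≤ kl.1 ∧ kl.1 ≤ kl.2)
    (h1 : I 1 = {(1, 1)})
    (h2 : ∀ t t' : ℕ, 1 ≤ t → t ≤ t' → ∀ a b, (a, b) ∈ I t →
      ∃ a' b', (a', b') ∈ I t' ∧ a' ≤ a ∧ b ≤ b')
    (h3 : ∀ t : ℕ, 1 ≤ t → ∀ a b, (a, b) ∈ I t →
      ∃ a' b', (a', b') ∈ I (t + 1) ∧ a' ≤ a + 1 ∧ b + 1 ≤ b')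
    (hmax : ∀ t a b a' b', (a, b) ∈ I t → (a', b') ∈ I t →
      a' ≤ a → b ≤ b' → a = a' ∧ b = b')
    (E : Finset ℕ) (hE : E.Nonempty) (hE1 : ∀ s ∈ E, 1 ≤ s)
    (hexc : ∀ t ∈ E, (∃ ℓ, (k, ℓ) ∈ I t) ∧ ¬ ∃ ℓ, (k + 1, ℓ) ∈ I (t + 1)) :
    ∀ t, E.max' hE < t →
      ∃ a b, (a, b) ∈ I t ∧ a ≤ k ∧ k ≤ b ∧ k + E.card ≤ b :=
  stmt_5_general I k hvalid h2 h3 hmax E hE hE1 hexc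
end

section
/- Let {I(t)}_{t=1}^{n+1} be a family of sets of maximal closed integer intervals satisfying the three interval-family axioms, and suppose that every interval [k,ℓ] appearing in any I(t) satisfies ℓ ≤ k + δ·k for a fixed constant δ > 0 (i.e., (1+δ)-multiplicative approximation error). Then there exists a time t₀ ∈ {1,...,n+1} with |I(t₀)| = Ω(n^{1/3}). In particular, choosing h = Θ(n^{1/3}), each count k ≤ h can be exceptional at most δk times, so φ_h ≤ δh(h+1)/2, and (φ_h+1)h ≤ n holds for h = c·n^{1/3} with a suitable constant c > 0 depending on δ. -/
/-!
Call `k` exceptional at time `t` if `k` is a left endpoint at time `t` but `k + 1` is not one at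
time `t + 1`. Between two times at which `k` is a left endpoint, an exception at the first one
strictly raises the right endpoint of the interval starting at `k`; since that endpoint lies in
`[k, k + δk]`, the count `k` is exceptional at most `⌊δk⌋ + 1` times. Hence at most
`w (⌊δw⌋ + 1)` times carry an exception of some `k ≤ w`, and if `(w (⌊δw⌋ + 1) + 1) w ≤ n`,
pigeonhole gives a window of `w` consecutive times without such exceptions. The left endpoint `1`
is always present, and inside the window each left endpoint `k ≤ w` moves on to `k + 1` at the
next step, so at the end of the window `1, …, w + 1` are all left endpoints. Taking
`w ≈ (n / (δ + 2))^{1/3}` gives the bound.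
-/

open Finset

/-- `(k, ℓ)` encodes the interval `[k, ℓ]`; the fields are axioms (i)–(iii) up to time `n + 1`,
together with maximality of the intervals in each `I t`. -/
structure IntervalFamily (I : ℕ → Finset (ℕ × ℕ)) (n : ℕ) : Prop where
  valid : ∀ t kl, kl ∈ I t → 1 ≤ kl.1 ∧ kl.1 ≤ kl.2
  init : I 1 = {(1, 1)}
  mono : ∀ t t' : ℕ, 1 ≤ t → t ≤ t' → t' ≤ n + 1 → ∀ k ℓ, (k, ℓ) ∈ I t →
    ∃ k' ℓ', (k', ℓ') ∈ I t' ∧ k' ≤ k ∧ ℓ ≤ ℓ'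
  shift : ∀ t : ℕ, 1 ≤ t → t + 1 ≤ n + 1 → ∀ k ℓ, (k, ℓ) ∈ I t →
    ∃ k' ℓ', (k', ℓ') ∈ I (t + 1) ∧ k' ≤ k + 1 ∧ ℓ + 1 ≤ ℓ'
  maximal : ∀ t k ℓ k' ℓ', (k, ℓ) ∈ I t → (k', ℓ') ∈ I t → k' ≤ k → ℓ ≤ ℓ' → k = k' ∧ ℓ = ℓ'

def IsLeftEnd (I : ℕ → Finset (ℕ × ℕ)) (t k : ℕ) : Prop :=
  ∃ ℓ, (k, ℓ) ∈ I t

def IsExceptional (I : ℕ → Finset (ℕ × ℕ)) (t k : ℕ) : Prop :=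
  IsLeftEnd I t k ∧ ¬ IsLeftEnd I (t + 1) (k + 1)

open Classical in
noncomputable def exceptionalTimes (I : ℕ → Finset (ℕ × ℕ)) (n k : ℕ) : Finset ℕ :=
  (Icc 1 n).filter (IsExceptional I · k)

lemma card_le_of_isLeftEnd {I : ℕ → Finset (ℕ × ℕ)} {t m : ℕ}
    (h : ∀ j ∈ Icc 1 m, IsLeftEnd I t j) : m ≤ #(I t) := by
  have hsub : Icc 1 m ⊆ (I t).image Prod.fst := fun j hj ↦ by
    obtain ⟨ℓ, hℓ⟩ := h j hj
    exact mem_image.2 ⟨(j, ℓ), hℓ, rfl⟩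
  simpa using (card_le_card hsub).trans card_image_le

lemma exists_Ico_disjoint_of_card_lt {B : Finset ℕ} {n m w : ℕ} (hmn : m * w ≤ n)
    (hB : #B < m) : ∃ t, 1 ≤ t ∧ t + w ≤ n + 1 ∧ Disjoint (Ico t (t + w)) B := by
  -- `(τ - 1) / w` is the index `i` of the window `[1 + i w, 1 + (i + 1) w)` containing `τ`
  obtain ⟨i, hi_mem, hiB⟩ := exists_mem_notMem_of_card_lt_card
    (s := B.image fun τ ↦ (τ - 1) / w) (t := range m) (card_image_le.trans_lt (by simpa))
  have hi : (i + 1) * w ≤ m * w := Nat.mul_le_mul_right w (mem_range.1 hi_mem)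
  refine ⟨1 + i * w, le_add_right le_rfl, by linarith, disjoint_left.2 fun τ hτ hτB ↦ hiB ?_⟩
  obtain ⟨hlo, hhi⟩ := mem_Ico.1 hτ
  exact mem_image.2 ⟨τ, hτB, Nat.div_eq_of_lt_le (by omega) (by rw [add_mul]; omega)⟩

namespace IntervalFamily

variable {I : ℕ → Finset (ℕ × ℕ)} {n : ℕ}

lemma isLeftEnd_one (hI : IntervalFamily I n) {t : ℕ} (ht : 1 ≤ t) (htn : t ≤ n + 1) :
    IsLeftEnd I t 1 := by
  obtain ⟨k, ℓ, hkℓ, hk, -⟩ := hI.mono 1 t le_rfl ht htn 1 1 (by simp [hI.init])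
  obtain rfl : k = 1 := le_antisymm hk (hI.valid t _ hkℓ).1
  exact ⟨ℓ, hkℓ⟩

lemma lt_of_isExceptional (hI : IntervalFamily I n) {t₁ t₂ k ℓ₁ ℓ₂ : ℕ} (ht₁ : 1 ≤ t₁)
    (ht₁₂ : t₁ < t₂) (ht₂ : t₂ ≤ n + 1) (hexc : ¬ IsLeftEnd I (t₁ + 1) (k + 1))
    (h₁ : (k, ℓ₁) ∈ I t₁) (h₂ : (k, ℓ₂) ∈ I t₂) : ℓ₁ < ℓ₂ := by
  obtain ⟨k', ℓ', h', hk', hℓ'⟩ := hI.shift t₁ ht₁ (by omega) k ℓ₁ h₁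
  have hk'k : k' ≤ k := by
    by_contra! hlt
    exact hexc ⟨ℓ', by rwa [show k' = k + 1 by omega] at h'⟩
  obtain ⟨k'', ℓ'', h'', hk'', hℓ''⟩ := hI.mono (t₁ + 1) t₂ (by omega) ht₁₂ ht₂ k' ℓ' h'
  by_contra! hle
  have := (hI.maximal t₂ k ℓ₂ k'' ℓ'' h₂ h'' (hk''.trans hk'k) (by omega)).2
  omega

lemma card_exceptionalTimes_le (hI : IntervalFamily I n) {δ : ℝ}
    (herr : ∀ t k ℓ, 1 ≤ t → t ≤ n + 1 → (k, ℓ) ∈ I t → (ℓ : ℝ) ≤ (k : ℝ) + δ * (k : ℝ))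
    (k : ℕ) : #(exceptionalTimes I n k) ≤ ⌊δ * k⌋₊ + 1 := by
  set E := exceptionalTimes I n k
  have hE : ∀ t ∈ E, (1 ≤ t ∧ t ≤ n) ∧ IsExceptional I t k := fun t ht ↦ by
    simpa [E, exceptionalTimes] using ht
  choose! g hg using fun t ht ↦ (hE t ht).2.1
  have hmono : StrictMonoOn g E := fun t ht t' ht' hlt ↦
    hI.lt_of_isExceptional (hE t ht).1.1 hlt (by linarith [(hE t' ht').1.2]) (hE t ht).2.2
      (hg t ht) (hg t' ht')
  have hmaps : Set.MapsTo g E (Icc k (k + ⌊δ * k⌋₊)) := fun t ht ↦ by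
    have hkg : k ≤ g t := (hI.valid t _ (hg t ht)).2
    have hub := herr t k (g t) (hE t ht).1.1 (by linarith [(hE t ht).1.2]) (hg t ht)
    have : g t - k ≤ ⌊δ * k⌋₊ := Nat.le_floor (by push_cast [hkg]; linarith)
    exact mem_Icc.2 ⟨hkg, by omega⟩
  simpa [add_assoc] using card_le_card_of_injOn g hmaps hmono.injOn

lemma isLeftEnd_of_forall_not_isExceptional (hI : IntervalFamily I n) {t w : ℕ} (ht : 1 ≤ t)
    (htw : t + w ≤ n + 1)
    (hgood : ∀ τ ∈ Ico t (t + w), ∀ k ∈ Icc 1 w, ¬ IsExceptional I τ k) :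
    ∀ d ≤ w, ∀ j ∈ Icc 1 (d + 1), IsLeftEnd I (t + d) j := by
  intro d
  induction d with
  | zero =>
    intro _ j hj
    obtain rfl : j = 1 := by simpa using hj
    exact hI.isLeftEnd_one ht (by omega)
  | succ d ih =>
    intro hd j hj
    obtain ⟨hj1, hjd⟩ := mem_Icc.1 hj
    rcases hj1.eq_or_lt with rfl | hj1
    · exact hI.isLeftEnd_one (by omega) (by omega)
    obtain ⟨j, rfl⟩ : ∃ j', j = j' + 1 := ⟨j - 1, by omega⟩
    have hnot := hgood (t + d) (mem_Ico.2 ⟨by omega, by omega⟩) j (mem_Icc.2 ⟨by omega, by omega⟩)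
    simpa [IsExceptional, add_assoc, ih (by omega) j (mem_Icc.2 ⟨by omega, by omega⟩)] using hnot

theorem exists_succ_le_card (hI : IntervalFamily I n) {δ : ℝ} (hδ : 0 ≤ δ)
    (herr : ∀ t k ℓ, 1 ≤ t → t ≤ n + 1 → (k, ℓ) ∈ I t → (ℓ : ℝ) ≤ (k : ℝ) + δ * (k : ℝ))
    {w : ℕ} (hw : (w * (⌊δ * w⌋₊ + 1) + 1) * w ≤ n) :
    ∃ t₀, 1 ≤ t₀ ∧ t₀ ≤ n + 1 ∧ w + 1 ≤ #(I t₀) := by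
  classical
  set B := (Icc 1 w).biUnion (exceptionalTimes I n)
  have hB : #B ≤ w * (⌊δ * w⌋₊ + 1) := by
    refine (card_biUnion_le_card_mul _ _ (⌊δ * w⌋₊ + 1) fun k hk ↦ ?_).trans (by simp)
    refine (hI.card_exceptionalTimes_le herr k).trans (Nat.add_le_add_right ?_ 1)
    exact Nat.floor_le_floor (mul_le_mul_of_nonneg_left (by exact_mod_cast (mem_Icc.1 hk).2) hδ)
  obtain ⟨t, ht, htw, hdisj⟩ := exists_Ico_disjoint_of_card_lt hw (Nat.lt_succ_of_le hB)
  have hgood : ∀ τ ∈ Ico t (t + w), ∀ k ∈ Icc 1 w, ¬ IsExceptional I τ k :=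
    fun τ hτ k hk hexc ↦ disjoint_left.1 hdisj hτ <| mem_biUnion.2 ⟨k, hk, by
      obtain ⟨hτt, hτw⟩ := mem_Ico.1 hτ
      exact mem_filter.2 ⟨mem_Icc.2 ⟨by omega, by omega⟩, hexc⟩⟩
  exact ⟨t + w, by omega, htw, card_le_of_isLeftEnd
    (hI.isLeftEnd_of_forall_not_isExceptional ht htw hgood w le_rfl)⟩

end IntervalFamily

lemma exists_nat_cube_le {a : ℝ} (ha : 0 < a) (n : ℕ) :
    ∃ w : ℕ, a * (w : ℝ) ^ 3 ≤ n ∧ (n : ℝ) ^ ((1 : ℝ) / 3) / a ^ ((1 : ℝ) / 3) ≤ w + 1 := by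
  set x := ((n : ℝ) / a) ^ ((1 : ℝ) / 3)
  have hx : 0 ≤ x := by positivity
  have hx3 : x ^ 3 = n / a := by
    simpa [x, one_div] using
      Real.rpow_inv_natCast_pow (n := 3) (by positivity : 0 ≤ (n : ℝ) / a) (by norm_num)
  refine ⟨⌊x⌋₊, ?_, ?_⟩
  · have := pow_le_pow_left₀ (Nat.cast_nonneg _) (Nat.floor_le hx) 3
    rw [hx3, le_div_iff₀ ha] at this
    linarith
  · rw [← Real.div_rpow (Nat.cast_nonneg _) ha.le]
    exact (Nat.lt_floor_add_one x).le

/-- For every `δ > 0` there is a constant `c > 0` (depending only on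
`δ`) such that: for every `n ≥ 1` and every family `{I(t)}_{t=1}^{n+1}` of finite
sets of maximal closed integer intervals satisfying the three interval-family
axioms, if every interval `[k,ℓ]` appearing at a time `1 ≤ t ≤ n+1` satisfies
`ℓ ≤ (1+δ)·k` (a `(1+δ)`-multiplicative error bound), then there is a time
`t₀ ∈ {1,…,n+1}` with `|I(t₀)| ≥ c·n^{1/3}`. -/
theorem stmt_6 (δ : ℝ) (hδ : 0 < δ) :
    ∃ c : ℝ, 0 < c ∧
      ∀ (n : ℕ), 1 ≤ n → ∀ I : ℕ → Finset (ℕ × ℕ),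
        (∀ t kl, kl ∈ I t → 1 ≤ kl.1 ∧ kl.1 ≤ kl.2) →
        I 1 = {(1, 1)} →
        (∀ t t' : ℕ, 1 ≤ t → t ≤ t' → t' ≤ n + 1 → ∀ k ℓ, (k, ℓ) ∈ I t →
          ∃ k' ℓ', (k', ℓ') ∈ I t' ∧ k' ≤ k ∧ ℓ ≤ ℓ') →
        (∀ t : ℕ, 1 ≤ t → t + 1 ≤ n + 1 → ∀ k ℓ, (k, ℓ) ∈ I t →
          ∃ k' ℓ', (k', ℓ') ∈ I (t + 1) ∧ k' ≤ k + 1 ∧ ℓ + 1 ≤ ℓ') →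
        (∀ t k ℓ k' ℓ', (k, ℓ) ∈ I t → (k', ℓ') ∈ I t →
          k' ≤ k → ℓ ≤ ℓ' → k = k' ∧ ℓ = ℓ') →
        (∀ t k ℓ, 1 ≤ t → t ≤ n + 1 → (k, ℓ) ∈ I t → (ℓ : ℝ) ≤ (k : ℝ) + δ * (k : ℝ)) →
        ∃ t₀, 1 ≤ t₀ ∧ t₀ ≤ n + 1 ∧ c * (n : ℝ) ^ ((1 : ℝ) / 3) ≤ ((I t₀).card : ℝ) := by
  have hδ2 : 0 < δ + 2 := by linarith
  refine ⟨1 / (δ + 2) ^ ((1 : ℝ) / 3), by positivity, ?_⟩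
  intro n _ I hvalid hinit hmono hshift hmax herr
  have hI : IntervalFamily I n := ⟨hvalid, hinit, hmono, hshift, hmax⟩
  obtain ⟨w, hcube, hw⟩ := exists_nat_cube_le hδ2 n
  have hsq : (w : ℝ) ^ 2 + w ≤ 2 * (w : ℝ) ^ 3 := by
    rcases Nat.eq_zero_or_pos w with rfl | hw1
    · simp
    · have : (1 : ℝ) ≤ w := by exact_mod_cast hw1
      nlinarith
  have hfloor : (⌊δ * w⌋₊ : ℝ) ≤ δ * w := Nat.floor_le (by positivity)
  have hwn : (w * (⌊δ * w⌋₊ + 1) + 1) * w ≤ n := by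
    have : ((w * (⌊δ * w⌋₊ + 1) + 1) * w : ℕ) ≤ (n : ℝ) := by
      push_cast
      nlinarith [mul_le_mul_of_nonneg_left hfloor (sq_nonneg (w : ℝ))]
    exact_mod_cast this
  obtain ⟨t₀, ht₀, ht₀n, hcard⟩ := hI.exists_succ_le_card hδ.le herr hwn
  refine ⟨t₀, ht₀, ht₀n, ?_⟩
  calc 1 / (δ + 2) ^ ((1 : ℝ) / 3) * (n : ℝ) ^ ((1 : ℝ) / 3)
      = (n : ℝ) ^ ((1 : ℝ) / 3) / (δ + 2) ^ ((1 : ℝ) / 3) := by ring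
    _ ≤ w + 1 := hw
    _ ≤ #(I t₀) := by exact_mod_cast hcard
end

section
/- Suppose there exists a randomized streaming algorithm using S bits of space that is robust against white-box adversaries and solves a one-way two-player communication problem f : X × Y → Z with success probability p > 1/2 against all adaptive inputs. Then there exists a deterministic one-way protocol for f using S bits of communication. Formally: let M be a matrix with rows indexed by (x, r_x) and columns by (y, r_y), such that the row index determines an S-bit state state(x, r_x) ∈ {0,1}^S with M_{(x,r_x),(y,r_y)} depending only on (state(x,r_x), y, r_y), and suppose for every x, E_{r_x}[min_y Pr_{r_y}[M_{(x,r_x),(y,r_y)} = f(x,y)]] ≥ p. Then there is a function D : X → {0,1}^S and a function B : {0,1}^S × Y → Z with B(D(x), y) = f(x, y) for all x, y. -/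
/-!
Since `p > 1/2`, averaging over Alice's randomness gives, for every `x`, a string `r_x` such that
against every `y` more than half of Bob's strings `r_y` lead to the answer `f x y`. Alice sends
`state x r_x` for this fixed `r_x`, and Bob outputs the strict-majority answer over all `r_y`,
which is unique and hence equal to `f x y`.
-/

open Finset

lemma exists_lt_of_lt_sum_div_card {ι : Type*} [Fintype ι] {g : ι → ℝ} {c : ℝ} (hc : 0 ≤ c)
    (h : c < (∑ i, g i) / Fintype.card ι) : ∃ i, c < g i := by
  by_contra! hle
  refine h.not_ge (div_le_of_le_mul₀ (Nat.cast_nonneg _) hc ?_)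
  simpa [mul_comm] using sum_le_sum fun i (_ : i ∈ univ) => hle i

section Majority

variable {Ω Z : Type*} [Fintype Ω] [DecidableEq Z]

lemma card_filter_eq_add_card_filter_eq_le {a b : Z} (hab : a ≠ b) (g : Ω → Z) :
    #{ω | g ω = a} + #{ω | g ω = b} ≤ Fintype.card Ω := by
  calc #{ω | g ω = a} + #{ω | g ω = b} ≤ #{ω | g ω = a} + #{ω | ¬g ω = a} := by
        gcongr
        exact fun hb ha => hab (ha.symm.trans hb)
    _ = Fintype.card Ω := card_filter_add_card_filter_not _

open Classical in
noncomputable def majority [Nonempty Ω] (g : Ω → Z) : Z :=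
  if h : ∃ z, Fintype.card Ω < 2 * #{ω | g ω = z} then h.choose else g (Classical.arbitrary Ω)

lemma majority_eq_of_card_lt [Nonempty Ω] {g : Ω → Z} {z : Z}
    (hz : Fintype.card Ω < 2 * #{ω | g ω = z}) : majority g = z := by
  have h : ∃ z, Fintype.card Ω < 2 * #{ω | g ω = z} := ⟨z, hz⟩
  rw [majority, dif_pos h]
  by_contra hne
  have h_card_sum := card_filter_eq_add_card_filter_eq_le hne g
  have h_chosen := h.choose_spec
  omega

lemma majority_eq_of_half_lt [Nonempty Ω] {g : Ω → Z} {z : Z}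
    (hz : 1 / 2 < (#{ω | g ω = z} : ℝ) / Fintype.card Ω) : majority g = z := by
  have hΩ : (0 : ℝ) < Fintype.card Ω := by exact_mod_cast Fintype.card_pos
  rw [lt_div_iff₀ hΩ] at hz
  exact majority_eq_of_card_lt (by exact_mod_cast (by linarith :
    (Fintype.card Ω : ℝ) < 2 * (#{ω | g ω = z} : ℕ)))

end Majority

theorem stmt_8_general {X Y Z Rx Ry : Type}
    [Fintype Y] [Fintype Rx] [Fintype Ry]
    [Nonempty Y] [Nonempty Ry] [DecidableEq Z]
    (S : ℕ) (state : X → Rx → (Fin S → Bool))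
    (M : (Fin S → Bool) → Y → Ry → Z) (f : X → Y → Z)
    (p : ℝ) (hp : 1 / 2 < p)
    (hrob : ∀ x : X, p ≤
      (∑ rx : Rx, Finset.univ.inf' Finset.univ_nonempty (fun y : Y =>
          ((Finset.univ.filter fun ry : Ry => M (state x rx) y ry = f x y).card : ℝ) /
            (Fintype.card Ry : ℝ))) / (Fintype.card Rx : ℝ)) :
    ∃ (D : X → (Fin S → Bool)) (B : (Fin S → Bool) → Y → Z),
      ∀ x y, B (D x) y = f x y := by
  have good_randomness : ∀ x, ∃ rx, ∀ y,
      1 / 2 < (#{ry | M (state x rx) y ry = f x y} : ℝ) / Fintype.card Ry := fun x => by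
    obtain ⟨rx, hrx⟩ := exists_lt_of_lt_sum_div_card (by norm_num) (hp.trans_le (hrob x))
    exact ⟨rx, fun y => (lt_inf'_iff _).1 hrx y (mem_univ y)⟩
  choose r hr using good_randomness
  exact ⟨fun x => state x (r x), fun s y => majority (M s y),
    fun x y => majority_eq_of_half_lt (hr x y)⟩

/-- If a randomized `S`-bit one-way protocol (arising from a
white-box adversarially robust streaming algorithm) computes `f : X × Y → Z`
with success probability `p > 1/2` against the worst-case adaptive choice of
Bob's input (in expectation over Alice's randomness), then there is a
deterministic one-way protocol for `f` using `S` bits of communication. -/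
theorem stmt_8 {X Y Z Rx Ry : Type}
    [Fintype X] [Fintype Y] [Fintype Rx] [Fintype Ry]
    [Nonempty Y] [Nonempty Rx] [Nonempty Ry] [DecidableEq Z]
    (S : ℕ) (state : X → Rx → (Fin S → Bool))
    (M : (Fin S → Bool) → Y → Ry → Z) (f : X → Y → Z)
    (p : ℝ) (hp : 1 / 2 < p)
    (hrob : ∀ x : X, p ≤
      (∑ rx : Rx, Finset.univ.inf' Finset.univ_nonempty (fun y : Y =>
          ((Finset.univ.filter fun ry : Ry => M (state x rx) y ry = f x y).card : ℝ) /
            (Fintype.card Ry : ℝ))) / (Fintype.card Rx : ℝ)) :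
    ∃ (D : X → (Fin S → Bool)) (B : (Fin S → Bool) → Y → Z),
      ∀ x y, B (D x) y = f x y :=
  stmt_8_general S state M f p hp hrob
end

section
/- Let A be an n × n integer matrix with entries bounded by M in absolute value, let k ≤ n, let q > (nM)^k be a modulus, and let H ∈ ℤ_q^{k×n}. If rank(A) < k over ℚ, then there exists a nonzero integer vector x with ‖x‖_∞ ≤ (nM)^k such that Ax = 0 over ℤ, and consequently HAx ≡ 0 (mod q) while x ≢ 0 (mod q). -/
/-!
Pick `r = rank A` rows of `A` spanning its rational row space. Since `r < n`, Siegel's lemma gives a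
nonzero integer vector with entries at most `(nM)^(r/(n-r)) ≤ (nM)^r` killing these rows, and hence
killing every row of `A`, which is a rational combination of them. Its entries are smaller than `q`
in absolute value, so it stays nonzero modulo `q`.
-/

open Matrix Submodule Set

attribute [local instance] Matrix.seminormedAddCommGroup

theorem Matrix.exists_rank_rows_span_eq {K m n : Type*} [Field K] [Fintype m] [Fintype n]
    (A : Matrix m n K) :
    ∃ ρ : Fin A.rank → m, span K (range (A.submatrix ρ id).row) = span K (range A.row) := by
  classical
  obtain ⟨κ, a, ha, hspan, hli⟩ := exists_linearIndependent' K A.row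
  have : Fintype κ := Fintype.ofInjective a ha
  have hcard : Fintype.card κ = A.rank := by
    rw [linearIndependent_iff_card_eq_finrank_span.mp hli, Set.finrank, hspan,
      A.rank_eq_finrank_span_row]
  refine ⟨a ∘ (Fintype.equivFinOfCardEq hcard).symm, ?_⟩
  rw [← hspan]
  congr 1
  exact EquivLike.range_comp (A.row ∘ a) _

theorem Matrix.mulVec_eq_zero_of_span_row_le {R l m n : Type*} [CommSemiring R] [Fintype n]
    {A : Matrix l n R} {B : Matrix m n R} (h : span R (range A.row) ≤ span R (range B.row))
    {x : n → R} (hx : B *ᵥ x = 0) : A *ᵥ x = 0 := by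
  have hB : span R (range B.row) ≤ LinearMap.ker ((dotProductBilin R R).flip x) :=
    span_le.mpr <| range_subset_iff.mpr fun i => congrFun hx i
  funext i
  exact (h.trans hB) (subset_span (mem_range_self i))

theorem Matrix.map_intCast_mulVec {R m n : Type*} [Ring R] [Fintype n] (A : Matrix m n ℤ)
    (x : n → ℤ) : A.map ((↑) : ℤ → R) *ᵥ (fun j => (x j : R)) = fun i => ((A *ᵥ x) i : R) :=
  funext fun i => (RingHom.map_mulVec (Int.castRingHom R) A x i).symm

theorem Real.rpow_div_sub_le_pow {a b : ℝ} (ha : 0 ≤ a) (hab : a ≤ b) (hb : 1 ≤ b) {m n : ℕ}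
    (hmn : m < n) : a ^ ((m : ℝ) / (n - m)) ≤ b ^ m := by
  have hsub : (1 : ℝ) ≤ n - m := by
    have : ((m + 1 : ℕ) : ℝ) ≤ n := by exact_mod_cast hmn
    push_cast at this
    linarith
  rw [← Real.rpow_natCast]
  calc a ^ ((m : ℝ) / (n - m)) ≤ b ^ ((m : ℝ) / (n - m)) := by gcongr
    _ ≤ b ^ (m : ℝ) := Real.rpow_le_rpow_of_exponent_le hb (div_le_self (Nat.cast_nonneg m) hsub)

theorem Int.Matrix.exists_ne_zero_mulVec_eq_zero_abs_le {α β : Type*} [Fintype α] [Fintype β]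
    (B : Matrix α β ℤ) {M : ℤ} (hM : 1 ≤ M) (hB : ∀ i j, |B i j| ≤ M)
    (hcard : Fintype.card α < Fintype.card β) :
    ∃ t : β → ℤ, t ≠ 0 ∧ B *ᵥ t = 0 ∧ ∀ j, |t j| ≤ (Fintype.card β * M) ^ Fintype.card α := by
  rcases (Fintype.card α).eq_zero_or_pos with hα | hα
  · have : IsEmpty α := Fintype.card_eq_zero_iff.mp hα
    have : Nonempty β := Fintype.card_pos_iff.mp (hα ▸ hcard)
    exact ⟨1, one_ne_zero, Subsingleton.elim _ _, fun j => by simp⟩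
  obtain ⟨t, ht0, hBt, ht⟩ := Int.Matrix.exists_ne_zero_int_vec_norm_le B hcard hα
  refine ⟨t, ht0, hBt, fun j => ?_⟩
  have hnormB : max 1 ‖B‖ ≤ M := by
    refine max_le (by exact_mod_cast hM) ((Matrix.norm_le_iff (by positivity)).mpr fun i j => ?_)
    rw [Int.norm_eq_abs]
    exact_mod_cast hB i j
  have hbase : (1 : ℝ) ≤ Fintype.card β * M :=
    one_le_mul_of_one_le_of_one_le (by exact_mod_cast hcard.pos) (by exact_mod_cast hM)
  have : ‖t j‖ ≤ ((Fintype.card β * M : ℤ) : ℝ) ^ Fintype.card α := calc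
    ‖t j‖ ≤ ‖t‖ := norm_le_pi_norm t j
    _ ≤ _ := ht
    _ ≤ _ := by
      push_cast
      exact Real.rpow_div_sub_le_pow (by positivity) (by gcongr) hbase hcard
  rw [Int.norm_eq_abs] at this
  exact_mod_cast this

theorem Int.Matrix.exists_ne_zero_mulVec_eq_zero_abs_le_pow_rank {m n : Type*} [Fintype m]
    [Fintype n] (A : Matrix m n ℤ) {M : ℤ} (hM : 1 ≤ M) (hA : ∀ i j, |A i j| ≤ M)
    (hrank : (A.map ((↑) : ℤ → ℚ)).rank < Fintype.card n) :
    ∃ x : n → ℤ, x ≠ 0 ∧ A *ᵥ x = 0 ∧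
      ∀ j, |x j| ≤ (Fintype.card n * M) ^ (A.map ((↑) : ℤ → ℚ)).rank := by
  obtain ⟨ρ, hρ⟩ := (A.map ((↑) : ℤ → ℚ)).exists_rank_rows_span_eq
  obtain ⟨x, hx0, hBx, hx⟩ := Int.Matrix.exists_ne_zero_mulVec_eq_zero_abs_le (A.submatrix ρ id)
    hM (fun i j => hA (ρ i) j) (by simpa using hrank)
  refine ⟨x, hx0, ?_, by simpa using hx⟩
  have hAx : A.map ((↑) : ℤ → ℚ) *ᵥ (fun j => (x j : ℚ)) = 0 := by
    refine mulVec_eq_zero_of_span_row_le hρ.ge ?_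
    rw [submatrix_map, map_intCast_mulVec, hBx]
    funext i
    simp
  rw [map_intCast_mulVec] at hAx
  ext i
  simpa using congrFun hAx i

theorem ZMod.intCast_ne_zero_of_abs_lt {q : ℕ} {a : ℤ} (ha : a ≠ 0) (hlt : |a| < q) :
    (a : ZMod q) ≠ 0 := fun h =>
  ha (Int.eq_zero_of_abs_lt_dvd ((ZMod.intCast_zmod_eq_zero_iff_dvd a q).mp h) hlt)

theorem stmt_13_general (n k M q : ℕ) (hM : 1 ≤ M) (hk : k ≤ n)
    (hq : (n * M) ^ k < q)
    (A : Matrix (Fin n) (Fin n) ℤ)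
    (hbound : ∀ i j, |A i j| ≤ (M : ℤ))
    (H : Matrix (Fin k) (Fin n) (ZMod q))
    (hrank : (A.map ((↑) : ℤ → ℚ)).rank < k) :
    ∃ x : Fin n → ℤ, x ≠ 0 ∧ (∀ i, |x i| ≤ ((n * M : ℕ) : ℤ) ^ k) ∧
      A.mulVec x = 0 ∧
      H.mulVec ((A.map (fun a => (a : ZMod q))).mulVec fun i => ((x i : ℤ) : ZMod q)) = 0 ∧
      ∃ i, ((x i : ℤ) : ZMod q) ≠ 0 := by
  obtain ⟨x, hx0, hAx, hx⟩ := Int.Matrix.exists_ne_zero_mulVec_eq_zero_abs_le_pow_rank A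
    (M := M) (by exact_mod_cast hM) hbound (by simp only [Fintype.card_fin]; omega)
  have hnM : 1 ≤ n * M := Nat.mul_le_mul (by omega : 1 ≤ n) hM
  have hxk : ∀ i, |x i| ≤ ((n * M : ℕ) : ℤ) ^ k := fun i => by
    refine (hx i).trans ?_
    rw [Fintype.card_fin, ← Nat.cast_mul]
    exact pow_le_pow_right₀ (by exact_mod_cast hnM) hrank.le
  refine ⟨x, hx0, hxk, hAx, ?_, ?_⟩
  · rw [map_intCast_mulVec, hAx]
    simp only [Pi.zero_apply, Int.cast_zero]
    exact H.mulVec_zero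
  · obtain ⟨i, hi⟩ := Function.ne_iff.mp hx0
    exact ⟨i, ZMod.intCast_ne_zero_of_abs_lt hi ((hxk i).trans_lt (by exact_mod_cast hq))⟩

/-- completeness of the streaming rank-decision test: If `A` is an
`n × n` integer matrix with entries bounded by `M ≥ 1`, `k ≤ n`, `q > (nM)^k`, and
`rank(A) < k` over `ℚ`, then there is a nonzero integer vector `x` with
`‖x‖_∞ ≤ (nM)^k`, `Ax = 0` over `ℤ`, hence `HAx ≡ 0 (mod q)` for any
`H ∈ ℤ_q^{k×n}`, while `x ≢ 0 (mod q)`. -/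
theorem stmt_13 (n k M q : ℕ) (hn : 1 ≤ n) (hM : 1 ≤ M) (hk : k ≤ n)
    (hq : (n * M) ^ k < q)
    (A : Matrix (Fin n) (Fin n) ℤ)
    (hbound : ∀ i j, |A i j| ≤ (M : ℤ))
    (H : Matrix (Fin k) (Fin n) (ZMod q))
    (hrank : (A.map ((↑) : ℤ → ℚ)).rank < k) :
    ∃ x : Fin n → ℤ, x ≠ 0 ∧ (∀ i, |x i| ≤ ((n * M : ℕ) : ℤ) ^ k) ∧
      A.mulVec x = 0 ∧
      H.mulVec ((A.map (fun a => (a : ZMod q))).mulVec fun i => ((x i : ℤ) : ZMod q)) = 0 ∧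
      ∃ i, ((x i : ℤ) : ZMod q) ≠ 0 :=
  stmt_13_general n k M q hM hk hq A hbound H hrank
end
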